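/- arXiv:2603.04160 — 7 statements merged into one kernel-verified Lean document; each statement's English description precedes it below -/
import Mathlib

section
/- Let S be a nonempty set of states and let N_C : P(P(S)) for each coalition C ⊆ AG be neighborhood functions at a fixed state satisfying: (liveness) ∅ ∉ N_C for all C; (inclusion) for all C ⊆ D and X ∈ N_D there is Y ∈ N_C with X ⊆ Y; (decomposition) for all C ⊆ D and X ∈ N_C there is Δ ⊆ N_D with X = ⋃ Δ. Then for every coalition C, ⋃ N_C = ⋃ N_∅. -/
/-- Fact "enabling the same successors": under liveness, actual power inclusion and
actual power decomposition, every coalition enables the same successors as the empty coalition. -/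
theorem actual_enabling_same_successors
    {A S : Type} [Fintype A] [Nonempty A] [Nonempty S]
    (N : Set A → Set (Set S))
    (liveness : ∀ C : Set A, ∅ ∉ N C)
    (inclusion : ∀ C D : Set A, C ⊆ D → ∀ X ∈ N D, ∃ Y ∈ N C, X ⊆ Y)
    (decomposition : ∀ C D : Set A, C ⊆ D → ∀ X ∈ N C, ∃ Δ ⊆ N D, X = ⋃₀ Δ) :
    ∀ C : Set A, ⋃₀ N C = ⋃₀ N (∅ : Set A) := by
  intro C
  apply Set.Subset.antisymm
  · rintro x ⟨X, hX, hx⟩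
    obtain ⟨Y, hY, hXY⟩ := inclusion ∅ C (Set.empty_subset C) X hX
    exact ⟨Y, hY, hXY hx⟩
  · rintro x ⟨X, hX, hx⟩
    obtain ⟨Δ, hΔ, hXeq⟩ := decomposition ∅ C (Set.empty_subset C) X hX
    rw [hXeq] at hx
    obtain ⟨Y, hY, hxY⟩ := hx
    exact ⟨Y, hΔ hY, hxY⟩
end

section
/- Let N_C (C ⊆ AG) be an AC-representative actual neighborhood assignment (satisfying actual triviality of the empty coalition, liveness, actual power inclusion, and actual power decomposition). If N_∅ ≠ ∅, then N_∅ = { ⋃ N_AG }, the singleton consisting of the union of all actual powers of the grand coalition. -/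
/-- If the empty coalition has any actual power, its only actual power is the
union of all actual powers of the grand coalition. -/
theorem actual_empty_coalition_power
    {A S : Type} [Fintype A] [Nonempty A] [Nonempty S]
    (N : Set A → Set (Set S))
    (triviality : (N (∅ : Set A)).Nonempty → ∃ X : Set S, N (∅ : Set A) = {X})
    (liveness : ∀ C : Set A, ∅ ∉ N C)
    (inclusion : ∀ C D : Set A, C ⊆ D → ∀ X ∈ N D, ∃ Y ∈ N C, X ⊆ Y)
    (decomposition : ∀ C D : Set A, C ⊆ D → ∀ X ∈ N C, ∃ Δ ⊆ N D, X = ⋃₀ Δ) :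
    N (∅ : Set A) ≠ ∅ → N (∅ : Set A) = {⋃₀ N (Set.univ : Set A)} := by
  intro hne
  obtain ⟨X, hX⟩ := triviality (Set.nonempty_iff_ne_empty.mpr hne)
  rw [hX]
  congr 1
  apply Set.Subset.antisymm
  · obtain ⟨Δ, hΔ, hXd⟩ := decomposition ∅ Set.univ (Set.empty_subset _) X
      (by rw [hX]; rfl)
    rw [hXd]
    exact Set.sUnion_subset_sUnion hΔ
  · intro x hx
    obtain ⟨Y, hY, hsub⟩ := hx
    obtain ⟨Z, hZ, hYZ⟩ := inclusion ∅ Set.univ (Set.empty_subset _) Y hY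
    rw [hX] at hZ
    have : Z = X := hZ
    exact this ▸ hYZ hsub
end

section
/- Let GCGF be an independent general concurrent game frame. Then for every state s, disjoint coalitions C and D, and sets X ∈ EF^ac_C(s), Y ∈ EF^ac_D(s), there exists Z ∈ EF^ac_{C∪D}(s) with Z ⊆ X ∩ Y. -/
/-- Restriction of a joint action of coalition `D` to a subcoalition `C`. -/
def restrictJA {A Act : Type} {C D : Set A} (h : C ⊆ D) (σ : D → Act) : C → Act :=
  fun a => σ ⟨a.1, h a.2⟩

/-- A general concurrent game frame: an action frame satisfying the
grand-coalition-induced outcome condition and the outcome-driven availability condition. -/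
structure GCGF (A S Act : Type) where
  av : (C : Set A) → S → Set (C → Act)
  out : (C : Set A) → S → (C → Act) → Set S
  gci : ∀ (C : Set A) (s : S) (σ : C → Act),
    out C s σ =
      ⋃ σg ∈ {σg : ((Set.univ : Set A)) → Act |
          restrictJA (Set.subset_univ C) σg = σ},
        out Set.univ s σg
  oda : ∀ (C : Set A) (s : S),
    av C s = {σ : C → Act | out C s σ ≠ ∅}

/-- The actual effectivity set of coalition `C` at state `s`. -/
def EFac {A S Act : Type} (F : GCGF A S Act) (C : Set A) (s : S) : Set (Set S) :=
  {X | ∃ σ ∈ F.av C s, F.out C s σ = X}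

open Classical in
/-- Combination of joint actions of two disjoint coalitions. -/
noncomputable def combineJA {A Act : Type} {C D : Set A}
    (σC : C → Act) (σD : D → Act) : ((C ∪ D : Set A)) → Act :=
  fun a => if h : a.1 ∈ C then σC ⟨a.1, h⟩ else σD ⟨a.1, a.2.resolve_left h⟩

/-- In an independent general concurrent game frame, actual powers of disjoint
coalitions can be jointly refined. -/
theorem GCGF.independent_EFac
    {A S Act : Type} [Nonempty S] (F : GCGF A S Act)
    (indep : ∀ (s : S) (C D : Set A), Disjoint C D →
      ∀ σC ∈ F.av C s, ∀ σD ∈ F.av D s, combineJA σC σD ∈ F.av (C ∪ D) s) :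
    ∀ (s : S) (C D : Set A), Disjoint C D →
      ∀ X ∈ EFac F C s, ∀ Y ∈ EFac F D s,
        ∃ Z ∈ EFac F (C ∪ D) s, Z ⊆ X ∩ Y := by
  intro s C D hCD X hX Y hY
  obtain ⟨σC, hσC, rfl⟩ := hX
  obtain ⟨σD, hσD, rfl⟩ := hY
  refine ⟨F.out (C ∪ D) s (combineJA σC σD),
    ⟨combineJA σC σD, indep s C D hCD σC hσC σD hσD, rfl⟩, ?_⟩
  intro x hx
  rw [F.gci] at hx
  simp only [Set.mem_iUnion, Set.mem_setOf_eq] at hx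
  obtain ⟨σg, hres, hx⟩ := hx
  constructor
  · rw [F.gci]
    simp only [Set.mem_iUnion, Set.mem_setOf_eq]
    refine ⟨σg, ?_, hx⟩
    funext a
    have h := congrFun hres ⟨a.1, Or.inl a.2⟩
    simp only [restrictJA, combineJA] at h ⊢
    rw [dif_pos a.2] at h
    exact h
  · rw [F.gci]
    simp only [Set.mem_iUnion, Set.mem_setOf_eq]
    refine ⟨σg, ?_, hx⟩
    funext a
    have h := congrFun hres ⟨a.1, Or.inr a.2⟩
    have hnc : a.1 ∉ C := fun hc => hCD.ne_of_mem hc a.2 rfl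
    simp only [restrictJA, combineJA] at h ⊢
    rw [dif_neg hnc] at h
    exact h
end

section
/- Let GCGF be a general concurrent game frame. Then its actual effectivity functions satisfy actual power decomposition: for every state s, coalitions C ⊆ D, and X ∈ EF^ac_C(s), there exists Δ ⊆ EF^ac_D(s) with X = ⋃ Δ. In particular, one may take Δ = { out_D(s, σ_AG|_D) : σ_AG ∈ av_AG(s), σ_C ⊆ σ_AG } where σ_C is any available joint action of C with out_C(s,σ_C) = X. -/
lemma restrictJA_comp {A Act : Type} {C D : Set A} (h : C ⊆ D) :
    ∀ σ : ((Set.univ : Set A)) → Act,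
    restrictJA (Set.subset_univ C) σ = restrictJA h (restrictJA (Set.subset_univ D) σ) :=
  fun _ => rfl

/-- Actual effectivity functions of a general concurrent game frame satisfy
actual power decomposition; moreover an explicit decomposing family can be given. -/
theorem GCGF.EFac_power_decomposition
    {A S Act : Type} [Nonempty S] (F : GCGF A S Act) :
    ∀ (s : S) (C D : Set A) (h : C ⊆ D), ∀ X ∈ EFac F C s,
      (∃ Δ ⊆ EFac F D s, X = ⋃₀ Δ) ∧
      (∀ σC ∈ F.av C s, F.out C s σC = X →
        {Z : Set S | ∃ σg ∈ F.av Set.univ s,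
            restrictJA (Set.subset_univ C) σg = σC ∧
            Z = F.out D s (restrictJA (Set.subset_univ D) σg)} ⊆ EFac F D s ∧
        X = ⋃₀ {Z : Set S | ∃ σg ∈ F.av Set.univ s,
            restrictJA (Set.subset_univ C) σg = σC ∧
            Z = F.out D s (restrictJA (Set.subset_univ D) σg)}) := by
  intro s C D h X hX
  -- main claim, parameterized by σC
  have main : ∀ σC ∈ F.av C s, F.out C s σC = X →
      {Z : Set S | ∃ σg ∈ F.av Set.univ s,
          restrictJA (Set.subset_univ C) σg = σC ∧
          Z = F.out D s (restrictJA (Set.subset_univ D) σg)} ⊆ EFac F D s ∧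
      X = ⋃₀ {Z : Set S | ∃ σg ∈ F.av Set.univ s,
          restrictJA (Set.subset_univ C) σg = σC ∧
          Z = F.out D s (restrictJA (Set.subset_univ D) σg)} := by
    intro σC hσC hout
    constructor
    · rintro Z ⟨σg, hg, hres, rfl⟩
      refine ⟨restrictJA (Set.subset_univ D) σg, ?_, rfl⟩
      rw [F.oda]
      -- out univ ⊆ out D, and out univ ≠ ∅
      have hne : F.out Set.univ s σg ≠ ∅ := by
        have := F.oda Set.univ s
        rw [this] at hg; exact hg
      have hsub : F.out Set.univ s σg ⊆ F.out D s (restrictJA (Set.subset_univ D) σg) := by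
        rw [F.gci D]
        intro x hx
        exact Set.mem_biUnion (by simp [Set.mem_setOf_eq]) hx
      intro hcon
      exact hne (Set.subset_empty_iff.mp (hcon ▸ hsub))
    · subst hout
      ext x
      rw [F.gci C]
      simp only [Set.mem_setOf_eq, Set.mem_iUnion, Set.mem_sUnion, exists_prop]
      constructor
      · rintro ⟨σg, hres, hx⟩
        have hne : F.out Set.univ s σg ≠ ∅ := fun hc => by
          rw [hc] at hx; exact hx
        have hg : σg ∈ F.av Set.univ s := by rw [F.oda]; exact hne
        refine ⟨F.out D s (restrictJA (Set.subset_univ D) σg), ⟨σg, hg, hres, rfl⟩, ?_⟩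
        rw [F.gci D]
        exact Set.mem_biUnion (by simp [Set.mem_setOf_eq]) hx
      · rintro ⟨Z, ⟨σg, hg, hres, rfl⟩, hx⟩
        rw [F.gci D] at hx
        simp only [Set.mem_setOf_eq, Set.mem_iUnion, exists_prop] at hx
        obtain ⟨σg', hres', hx'⟩ := hx
        refine ⟨σg', ?_, hx'⟩
        rw [restrictJA_comp h σg', hres', ← restrictJA_comp h σg, hres]
  obtain ⟨σC, hσC, hout⟩ := hX
  refine ⟨⟨_, (main σC hσC hout).1, (main σC hσC hout).2⟩, main⟩
end

section
/- Let N^α_C be an α-representative alpha neighborhood assignment with N^α_∅ ≠ ∅, let T be the unique element of CoreN^α_∅, and define N'_C = { X ∈ N^α_C : X ⊆ T } for each coalition C. Then the assignment N'_C satisfies the four AC-representativeness conditions: actual triviality of the empty coalition, liveness, actual power inclusion, and actual power decomposition. -/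
/-- The nonmonotonic core: the ⊆-minimal elements of a family of sets. -/
def coreN {S : Type} (F : Set (Set S)) : Set (Set S) :=
  {X ∈ F | ∀ Y ∈ F, Y ⊆ X → Y = X}

/-- Restricting an α-representative alpha neighborhood assignment to subsets of the
unique element of the empty coalition's core yields an AC-representative (actual)
neighborhood assignment. -/
theorem alpha_restricted_is_AC_representative
    {A S : Type} [Fintype A] [Nonempty A] [Nonempty S]
    (N : Set A → Set (Set S))
    (upward : ∀ (C : Set A), ∀ X ∈ N C, ∀ Y : Set S, X ⊆ Y → Y ∈ N C)
    (triviality : (N (∅ : Set A)).Nonempty → ∃ T : Set S, coreN (N (∅ : Set A)) = {T})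
    (liveness : ∀ C : Set A, ∅ ∉ N C)
    (groundedness : ∀ (C : Set A), ∀ X ∈ N C,
      ∃ Y ∈ N C, Y ⊆ ⋃₀ coreN (N (∅ : Set A)) ∧ Y ⊆ X)
    (mono : ∀ C D : Set A, C ⊆ D → N C ⊆ N D)
    (hne : N (∅ : Set A) ≠ ∅)
    (T : Set S) (hT : coreN (N (∅ : Set A)) = {T})
    (N' : Set A → Set (Set S)) (hN' : ∀ C : Set A, N' C = {X ∈ N C | X ⊆ T}) :
    ((N' (∅ : Set A)).Nonempty → ∃ X : Set S, N' (∅ : Set A) = {X}) ∧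
    (∀ C : Set A, ∅ ∉ N' C) ∧
    (∀ C D : Set A, C ⊆ D → ∀ X ∈ N' D, ∃ Y ∈ N' C, X ⊆ Y) ∧
    (∀ C D : Set A, C ⊆ D → ∀ X ∈ N' C, ∃ Δ ⊆ N' D, X = ⋃₀ Δ) := by

  have hTcore : T ∈ coreN (N (∅ : Set A)) := by rw [hT]; rfl
  obtain ⟨hTN, hTmin⟩ := hTcore
  refine ⟨?_, ?_, ?_, ?_⟩
  · intro _
    refine ⟨T, ?_⟩
    rw [hN']
    ext X
    simp only [Set.mem_setOf_eq, Set.mem_singleton_iff]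
    constructor
    · rintro ⟨hX, hXT⟩; exact hTmin X hX hXT
    · rintro rfl; exact ⟨hTN, subset_rfl⟩
  · intro C h
    rw [hN'] at h
    exact liveness C h.1
  · intro C D _ X hX
    rw [hN'] at hX ⊢
    exact ⟨T, ⟨mono ∅ C (Set.empty_subset C) hTN, subset_rfl⟩, hX.2⟩
  · intro C D hCD X hX
    rw [hN'] at hX
    refine ⟨{X}, ?_, by simp⟩
    intro Y hY
    rw [Set.mem_singleton_iff] at hY
    subst hY
    rw [hN']
    exact ⟨mono C D hCD hX.1, hX.2⟩
end

section
/- There exists a two-agent actual neighborhood frame that satisfies the four AC-representativeness conditions and STIT-independence, but does not AC-represent any independent general concurrent game frame. Concretely, with states {s, t1, t2, t3}, set at s: N_∅(s) = {{t1,t2,t3}}, N_a(s) = N_b(s) = N_{a,b}(s) = {{t1,t2},{t2,t3}}, and N_C(x) = {{s,t1,t2,t3}} at all other states x; this frame is a counterexample. -/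
open Classical in
noncomputable def Nctr : Fin 4 → Set Bool → Set (Set (Fin 4)) :=
  fun x C => if x = 0 then (if C = ∅ then {{1,2,3}} else {{1,2},{2,3}}) else {Set.univ}

lemma restrict_combine_left {A Act : Type} {C D : Set A} (σC : C → Act) (σD : D → Act) :
    restrictJA Set.subset_union_left (combineJA σC σD) = σC := by
  funext a; exact dif_pos a.2

lemma restrict_combine_right {A Act : Type} {C D : Set A} (hdis : Disjoint C D)
    (σC : C → Act) (σD : D → Act) :
    restrictJA Set.subset_union_right (combineJA σC σD) = σD := by
  funext a; exact dif_neg (Set.disjoint_right.mp hdis a.2)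

lemma out_mono {A S Act : Type} (F : GCGF A S Act) {C D : Set A} (h : C ⊆ D) (s : S)
    (σ : D → Act) : F.out D s σ ⊆ F.out C s (restrictJA h σ) := by
  intro x hx
  rw [F.gci D s σ] at hx
  rw [F.gci C s]
  simp only [Set.mem_iUnion, Set.mem_setOf_eq, exists_prop] at hx ⊢
  obtain ⟨σg, hg, hxg⟩ := hx
  exact ⟨σg, by rw [← hg]; rfl, hxg⟩

lemma two_mem_Nctr0 {E : Set Bool} {Z : Set (Fin 4)} (hZ : Z ∈ Nctr 0 E) :
    (2 : Fin 4) ∈ Z := by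
  by_cases hE : E = ∅
  · simp [Nctr, hE] at hZ; subst hZ; simp
  · simp [Nctr, hE] at hZ
    rcases hZ with h | h <;> subst h <;> simp


/-- There is a two-agent actual neighborhood frame (agents `Bool`, states
`Fin 4` with `0 = s`, `1 = t₁`, `2 = t₂`, `3 = t₃`) that is AC-representative and
STIT-independent but does not AC-represent any independent general concurrent
game frame. -/
theorem stit_independence_insufficient :
    ∃ N : Fin 4 → Set Bool → Set (Set (Fin 4)),
      -- the concrete frame
      (N 0 (∅ : Set Bool) = {{1, 2, 3}}) ∧
      (∀ C : Set Bool, C ≠ ∅ → N 0 C = {{1, 2}, {2, 3}}) ∧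
      (∀ x : Fin 4, x ≠ 0 → ∀ C : Set Bool, N x C = {Set.univ}) ∧
      -- AC-representativeness: actual triviality of the empty coalition
      (∀ x : Fin 4, (N x (∅ : Set Bool)).Nonempty → ∃ X, N x (∅ : Set Bool) = {X}) ∧
      -- liveness
      (∀ (x : Fin 4) (C : Set Bool), ∅ ∉ N x C) ∧
      -- actual power inclusion
      (∀ (x : Fin 4) (C D : Set Bool), C ⊆ D → ∀ X ∈ N x D, ∃ Y ∈ N x C, X ⊆ Y) ∧
      -- actual power decomposition
      (∀ (x : Fin 4) (C D : Set Bool), C ⊆ D → ∀ X ∈ N x C, ∃ Δ ⊆ N x D, X = ⋃₀ Δ) ∧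
      -- STIT-independence
      (∀ (x : Fin 4) (C D : Set Bool), Disjoint C D →
        ∀ X ∈ N x C, ∀ Y ∈ N x D, (X ∩ Y).Nonempty) ∧
      -- no independent GCGF is AC-represented by this frame
      (∀ (Act : Type) (F : GCGF Bool (Fin 4) Act),
        (∀ (s : Fin 4) (C D : Set Bool), Disjoint C D →
          ∀ σC ∈ F.av C s, ∀ σD ∈ F.av D s, combineJA σC σD ∈ F.av (C ∪ D) s) →
        ¬ (∀ (C : Set Bool) (s : Fin 4), EFac F C s = N s C)) := by
  refine ⟨Nctr, by simp [Nctr], fun C hC => by simp [Nctr, hC],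
    fun x hx C => by simp [Nctr, hx], ?_, ?_, ?_, ?_, ?_, ?_⟩
  · -- triviality of empty coalition
    intro x _
    by_cases hx : x = 0
    · exact ⟨{1,2,3}, by simp [Nctr, hx]⟩
    · exact ⟨Set.univ, by simp [Nctr, hx]⟩
  · -- liveness
    intro x C h
    by_cases hx : x = 0
    · subst hx
      by_cases hC : C = ∅
      · simp [Nctr, hC] at h
        have : (1 : Fin 4) ∈ (∅ : Set (Fin 4)) := h ▸ (by simp)
        simp at this
      · simp [Nctr, hC] at h
        rcases h with h | h
        · have : (2 : Fin 4) ∈ (∅ : Set (Fin 4)) := h ▸ (by simp)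
          simp at this
        · have : (2 : Fin 4) ∈ (∅ : Set (Fin 4)) := h ▸ (by simp)
          simp at this
    · simp [Nctr, hx] at h
      have : (0 : Fin 4) ∈ (∅ : Set (Fin 4)) := h ▸ (by simp)
      simp at this
  · -- actual power inclusion
    intro x C D hCD X hX
    by_cases hx : x = 0
    · subst hx
      by_cases hC : C = ∅
      · refine ⟨{1,2,3}, by simp [Nctr, hC], ?_⟩
        by_cases hD : D = ∅
        · simp [Nctr, hD] at hX; subst hX; rfl
        · simp [Nctr, hD] at hX
          rcases hX with h | h <;> subst h <;> intro y hy <;> simp at hy ⊢ <;> tauto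
      · have hD : D ≠ ∅ := by
          intro h; exact hC (Set.subset_empty_iff.mp (h ▸ hCD))
        refine ⟨X, ?_, le_refl X⟩
        simpa [Nctr, hC] using (by simpa [Nctr, hD] using hX : X = {1,2} ∨ X = {2,3})
    · exact ⟨Set.univ, by simp [Nctr, hx], Set.subset_univ X⟩
  · -- actual power decomposition
    intro x C D hCD X hX
    by_cases hx : x = 0
    · subst hx
      by_cases hC : C = ∅
      · simp [Nctr, hC] at hX
        subst hX
        by_cases hD : D = ∅
        · exact ⟨{{1,2,3}}, by simp [Nctr, hD], by simp⟩
        · refine ⟨{{1,2},{2,3}}, by simp [Nctr, hD], ?_⟩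
          rw [Set.sUnion_insert, Set.sUnion_singleton]
          ext y; simp; tauto
      · have hD : D ≠ ∅ := by
          intro h; exact hC (Set.subset_empty_iff.mp (h ▸ hCD))
        refine ⟨{X}, ?_, by simp⟩
        rw [Set.singleton_subset_iff]
        simpa [Nctr, hD] using (by simpa [Nctr, hC] using hX : X = {1,2} ∨ X = {2,3})
    · simp [Nctr, hx] at hX
      exact ⟨{Set.univ}, by simp [Nctr, hx], by simp [hX]⟩
  · -- STIT independence
    intro x C D _ X hX Y hY
    by_cases hx : x = 0
    · subst hx
      exact ⟨2, two_mem_Nctr0 hX, two_mem_Nctr0 hY⟩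
    · simp [Nctr, hx] at hX hY
      exact ⟨0, by simp [hX, hY]⟩
  · -- no independent GCGF represented
    intro Act F hind hrep
    have hT : ({true} : Set Bool) ≠ ∅ := by simp
    have hF : ({false} : Set Bool) ≠ ∅ := by simp
    have ha : ({1,2} : Set (Fin 4)) ∈ EFac F {true} 0 := by
      rw [hrep]; simp [Nctr, hT]
    have hb : ({2,3} : Set (Fin 4)) ∈ EFac F {false} 0 := by
      rw [hrep]; simp [Nctr, hF]
    obtain ⟨σa, hava, houta⟩ := ha
    obtain ⟨σb, havb, houtb⟩ := hb
    have hdis : Disjoint ({true} : Set Bool) {false} := by simp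
    have hcomb := hind 0 {true} {false} hdis σa hava σb havb
    have hUne : (({true} ∪ {false} : Set Bool)) ≠ ∅ := by
      intro h
      have : (true : Bool) ∈ (∅ : Set Bool) := h ▸ (by simp)
      simp at this
    have hmem : F.out ({true} ∪ {false}) 0 (combineJA σa σb)
        ∈ EFac F ({true} ∪ {false}) 0 := ⟨combineJA σa σb, hcomb, rfl⟩
    rw [hrep] at hmem
    simp only [Nctr, if_pos rfl, if_neg hUne, Set.mem_insert_iff, Set.mem_singleton_iff] at hmem
    have h1 : F.out ({true} ∪ {false}) 0 (combineJA σa σb) ⊆ {1,2} := by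
      have := out_mono F (Set.subset_union_left) 0 (combineJA σa σb)
      rwa [restrict_combine_left, houta] at this
    have h2 : F.out ({true} ∪ {false}) 0 (combineJA σa σb) ⊆ {2,3} := by
      have := out_mono F (Set.subset_union_right) 0 (combineJA σa σb)
      rwa [restrict_combine_right hdis, houtb] at this
    rcases hmem with h | h
    · have : (1 : Fin 4) ∈ ({2,3} : Set (Fin 4)) := h2 (h.symm ▸ (by simp))
      simp at this
    · have : (3 : Fin 4) ∈ ({1,2} : Set (Fin 4)) := h1 (h.symm ▸ (by simp))
      simp at this
end

section
/- An alpha neighborhood frame (with all neighborhoods upward closed) is truly playable (satisfies liveness, safety, superadditivity, AG-maximality, and crown) if and only if it is α-representative (alpha triviality of the empty coalition, liveness, groundedness of alpha powers, monotonicity of alpha neighborhoods) and additionally α-serial, α-independent, and α-deterministic. -/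
/-- An alpha neighborhood frame with upward-closed neighborhoods is truly playable
iff it is α-representative, α-serial, α-independent, and α-deterministic. -/
theorem trulyPlayable_iff_alphaRepresentative_SID
    {A St : Type} [Fintype A] [Nonempty A] [Nonempty St]
    (N : Set A → St → Set (Set St))
    (upward : ∀ (C : Set A) (s : St), ∀ X ∈ N C s, ∀ Y : Set St, X ⊆ Y → Y ∈ N C s) :
    -- true playability
    ((∀ (C : Set A) (s : St), ∅ ∉ N C s) ∧
     (∀ (C : Set A) (s : St), Set.univ ∈ N C s) ∧
     (∀ (C D : Set A) (s : St), Disjoint C D →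
        ∀ X ∈ N C s, ∀ Y ∈ N D s, X ∩ Y ∈ N (C ∪ D) s) ∧
     (∀ (s : St) (X : Set St), Xᶜ ∉ N (∅ : Set A) s → X ∈ N (Set.univ : Set A) s) ∧
     (∀ (s : St), ∀ X ∈ N (Set.univ : Set A) s, ∃ x ∈ X, {x} ∈ N (Set.univ : Set A) s))
    ↔
    -- α-representativeness
    (((∀ s : St, (N (∅ : Set A) s).Nonempty → ∃ T : Set St, coreN (N (∅ : Set A) s) = {T}) ∧
      (∀ (C : Set A) (s : St), ∅ ∉ N C s) ∧
      (∀ (C : Set A) (s : St), ∀ X ∈ N C s,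
        ∃ Y ∈ N C s, Y ⊆ ⋃₀ coreN (N (∅ : Set A) s) ∧ Y ⊆ X) ∧
      (∀ (C D : Set A) (s : St), C ⊆ D → N C s ⊆ N D s)) ∧
     -- α-seriality
     (∀ (C : Set A) (s : St), N C s ≠ ∅) ∧
     -- α-independence
     (∀ (C D : Set A) (s : St), Disjoint C D →
        ∀ X ∈ N C s, ∀ Y ∈ N D s, X ∩ Y ∈ N (C ∪ D) s) ∧
     -- α-determinism
     (∀ s : St, (∀ X ∈ coreN (N (Set.univ : Set A) s), ∃ x : St, X = {x}) ∧
        ⋃₀ coreN (N (∅ : Set A) s) ⊆ ⋃₀ coreN (N (Set.univ : Set A) s))) := by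
  constructor
  · rintro ⟨live, safe, superadd, agmax, crown⟩
    set W : St → Set St := fun s => {x | {x} ∈ N (Set.univ : Set A) s} with hWdef
    have hWmem : ∀ s, W s ∈ N (∅ : Set A) s := by
      intro s
      by_contra h
      have h2 : (W s)ᶜ ∈ N (Set.univ : Set A) s := by
        apply agmax
        simpa using h
      obtain ⟨x, hx, hxs⟩ := crown s _ h2
      exact hx hxs
    have hsub : ∀ s, ∀ X ∈ N (∅ : Set A) s, W s ⊆ X := by
      intro s X hX x hx
      have hdisj : Disjoint (∅ : Set A) (Set.univ : Set A) := by simp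
      have h1 : X ∩ {x} ∈ N ((∅ : Set A) ∪ Set.univ) s :=
        superadd ∅ Set.univ s hdisj X hX {x} hx
      rw [Set.empty_union] at h1
      by_contra hxX
      have : X ∩ {x} = ∅ := by
        rw [Set.inter_singleton_eq_empty]
        exact hxX
      rw [this] at h1
      exact live _ s h1
    have hcore : ∀ s, coreN (N (∅ : Set A) s) = {W s} := by
      intro s
      ext X
      simp only [coreN, Set.mem_setOf_eq, Set.mem_singleton_iff]
      constructor
      · rintro ⟨hX, hmin⟩
        exact (hmin (W s) (hWmem s) (hsub s X hX)).symm
      · rintro rfl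
        exact ⟨hWmem s, fun Y hY hYW => Set.Subset.antisymm hYW (hsub s Y hY)⟩
    have hUnion : ∀ s, ⋃₀ coreN (N (∅ : Set A) s) = W s := by
      intro s; rw [hcore s, Set.sUnion_singleton]
    refine ⟨⟨?_, live, ?_, ?_⟩, ?_, superadd, ?_⟩
    · intro s _
      exact ⟨W s, hcore s⟩
    · intro C s X hX
      refine ⟨X ∩ W s, ?_, ?_, Set.inter_subset_left⟩
      · have hdisj : Disjoint C (∅ : Set A) := by simp
        have := superadd C ∅ s hdisj X hX (W s) (hWmem s)
        rwa [Set.union_empty] at this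
      · rw [hUnion s]; exact Set.inter_subset_right
    · intro C D s hCD X hX
      have hdisj : Disjoint C (D \ C) := Set.disjoint_left.mpr fun a ha h => h.2 ha
      have := superadd C (D \ C) s hdisj X hX Set.univ (safe _ s)
      rwa [Set.inter_univ, Set.union_diff_cancel hCD] at this
    · intro C s
      exact (Set.nonempty_of_mem (safe C s)).ne_empty
    · intro s
      constructor
      · rintro X ⟨hXN, hmin⟩
        obtain ⟨x, hxX, hxN⟩ := crown s X hXN
        exact ⟨x, (hmin {x} hxN (Set.singleton_subset_iff.mpr hxX)).symm⟩
      · rw [hUnion s]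
        intro x hx
        refine ⟨{x}, ⟨hx, ?_⟩, rfl⟩
        intro Y hY hYx
        rcases Set.subset_singleton_iff_eq.mp hYx with h | h
        · exact absurd (h ▸ hY) (live _ s)
        · exact h
  · rintro ⟨⟨triv, live, ground, mono⟩, serial, indep, det⟩
    have hne : ∀ s : St, (N (∅ : Set A) s).Nonempty := fun s =>
      Set.nonempty_iff_ne_empty.mpr (serial ∅ s)
    choose T hT using fun s => triv s (hne s)
    have hTcore : ∀ s, T s ∈ coreN (N (∅ : Set A) s) := by
      intro s; rw [hT s]; exact rfl
    have hTmem : ∀ s, T s ∈ N (∅ : Set A) s := fun s => (hTcore s).1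
    have hTmin : ∀ s, ∀ Y ∈ N (∅ : Set A) s, Y ⊆ T s → Y = T s := fun s => (hTcore s).2
    have hUnion : ∀ s, ⋃₀ coreN (N (∅ : Set A) s) = T s := by
      intro s; rw [hT s, Set.sUnion_singleton]
    have hsubT : ∀ s, ∀ X ∈ N (∅ : Set A) s, T s ⊆ X := by
      intro s X hX
      obtain ⟨Y, hYN, hYT, hYX⟩ := ground ∅ s X hX
      rw [hUnion s] at hYT
      exact (hTmin s Y hYN hYT) ▸ hYX
    have hTsing : ∀ s, ∀ x ∈ T s, {x} ∈ N (Set.univ : Set A) s := by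
      intro s x hx
      have hx2 : x ∈ ⋃₀ coreN (N (Set.univ : Set A) s) := by
        apply (det s).2
        rw [hUnion s]; exact hx
      obtain ⟨X, hXc, hxX⟩ := hx2
      obtain ⟨y, rfl⟩ := (det s).1 X hXc
      rcases hxX with rfl
      exact hXc.1
    refine ⟨live, ?_, indep, ?_, ?_⟩
    · intro C s
      obtain ⟨X, hX⟩ := Set.nonempty_iff_ne_empty.mpr (serial C s)
      exact upward C s X hX Set.univ (Set.subset_univ X)
    · intro s X hXc
      have hns : ¬ T s ⊆ Xᶜ := by
        intro h
        exact hXc (upward ∅ s (T s) (hTmem s) Xᶜ h)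
      obtain ⟨x, hxT, hxX⟩ := Set.not_subset.mp hns
      rw [Set.notMem_compl_iff] at hxX
      exact upward Set.univ s {x} (hTsing s x hxT) X (Set.singleton_subset_iff.mpr hxX)
    · intro s X hX
      obtain ⟨Y, hYN, hYT, hYX⟩ := ground Set.univ s X hX
      rw [hUnion s] at hYT
      obtain ⟨x, hxY⟩ := Set.nonempty_iff_ne_empty.mpr
        (fun h : Y = ∅ => live Set.univ s (h ▸ hYN))
      exact ⟨x, hYX hxY, hTsing s x (hYT hxY)⟩
end
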